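/- Let G be a graph and D_G the set consisting of all edge indicators Ind[e], all single-coordinate perturbations Ind[e]^{⊕i} for the two 1-coordinates i of each edge indicator, and the all-zeros string. Then every certificate for IsEdge_G over D_G on the all-zeros input consists of negated literals whose variables form a vertex cover of G. -/

import Mathlib

open Classical

/-- Indicator string of an edge e: 1 exactly on the two endpoints of e. -/
noncomputable def edgeInd {n : ℕ} (e : Sym2 (Fin n)) : Fin n → Bool :=
  fun i => decide (i ∈ e)

noncomputable def isEdge {n : ℕ} (G : SimpleGraph (Fin n)) (x : Fin n → Bool) : Bool :=
  decide (∃ e ∈ G.edgeSet, x = edgeInd e)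

/-- The coreset D_G: edge indicators, flips of their 1-coordinates, and the zero string. -/
noncomputable def DG {n : ℕ} (G : SimpleGraph (Fin n)) : Set (Fin n → Bool) :=
  {x | ∃ e ∈ G.edgeSet, x = edgeInd e} ∪
  {x | ∃ e ∈ G.edgeSet, ∃ i, i ∈ e ∧ x = Function.update (edgeInd e) i false} ∪
  {fun _ => false}

/-! A certificate consistent with the all-zeros string has only negative literals. If it mentioned
neither endpoint of an edge `uv`, the edge indicator of `uv`, which lies in `D_G`, would be consistent
with it while `isEdge` separates it from the all-zeros string. -/

section EdgeIndicator

variable {n : ℕ}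

lemma edgeInd_eq_false_iff {e : Sym2 (Fin n)} {i : Fin n} : edgeInd e i = false ↔ i ∉ e := by
  simp [edgeInd]

lemma edgeInd_mem_DG {G : SimpleGraph (Fin n)} {e : Sym2 (Fin n)} (he : e ∈ G.edgeSet) :
    edgeInd e ∈ DG G :=
  Or.inl (Or.inl ⟨e, he, rfl⟩)

lemma isEdge_edgeInd {G : SimpleGraph (Fin n)} {e : Sym2 (Fin n)} (he : e ∈ G.edgeSet) :
    isEdge G (edgeInd e) = true :=
  decide_eq_true ⟨e, he, rfl⟩

lemma isEdge_zero (G : SimpleGraph (Fin n)) : isEdge G (fun _ => false) = false := by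
  refine decide_eq_false fun ⟨e, _, he⟩ => ?_
  induction e with
  | h u v => simpa [edgeInd] using congrFun he u

lemma edgeInd_consistent_of_negative {ρ : Finset (Fin n × Bool)} {e : Sym2 (Fin n)}
    (hneg : ∀ p ∈ ρ, p.2 = false) (havoid : ∀ p ∈ ρ, p.1 ∉ e) :
    ∀ p ∈ ρ, edgeInd e p.1 = p.2 := fun p hp => by
  rw [hneg p hp, edgeInd_eq_false_iff]
  exact havoid p hp

end EdgeIndicator

/-- every certificate for IsEdge_G over D_G on the all-zeros input consists of
negated literals whose variables form a vertex cover of G. -/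
theorem stmt14 {n : ℕ} (G : SimpleGraph (Fin n)) (ρ : Finset (Fin n × Bool))
    (hcons : ∀ p ∈ ρ, (fun _ => false : Fin n → Bool) p.1 = p.2)
    (hcert : ∀ y ∈ DG G, (∀ p ∈ ρ, y p.1 = p.2) →
      isEdge G y = isEdge G (fun _ => false)) :
    (∀ p ∈ ρ, p.2 = false) ∧
    (∀ ⦃u v : Fin n⦄, G.Adj u v → (∃ b, (u, b) ∈ ρ) ∨ (∃ b, (v, b) ∈ ρ)) := by
  have hneg : ∀ p ∈ ρ, p.2 = false := fun p hp => (hcons p hp).symm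
  refine ⟨hneg, fun u v huv => ?_⟩
  by_contra! hfree
  have havoid : ∀ p ∈ ρ, p.1 ∉ s(u, v) := by
    rintro ⟨w, b⟩ hp hw
    rcases Sym2.mem_iff.mp hw with rfl | rfl
    exacts [hfree.1 b hp, hfree.2 b hp]
  have hsame := hcert _ (edgeInd_mem_DG huv) (edgeInd_consistent_of_negative hneg havoid)
  rw [isEdge_edgeInd huv, isEdge_zero] at hsame
  exact Bool.noConfusion hsame
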